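/- arXiv:1610.09675 — 7 statements merged into one kernel-verified Lean document; each statement's English description precedes it below -/
import Mathlib

section
/- Let X be a compact metric space, k ∈ ℕ, α_1,…,α_k, β_1,…,β_k ∈ [0,1] with Σα_i = Σβ_i = 1, and μ_1,…,μ_k, ν_1,…,ν_k Borel probability measures on X. Then D_P(Σ_i α_i μ_i, Σ_i β_i ν_i) ≤ (1/2) Σ_i |α_i − β_i| + max_{1≤i≤k} D_P(μ_i, ν_i), where D_P is the Prokhorov metric. -/
/-!
Weighting the componentwise inequalities `μᵢ B ≤ νᵢ (thickening t B) + t` and using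
`aᵢ ≤ bᵢ + (aᵢ - bᵢ)` together with `νᵢ ≤ 1` gives
`(∑ aᵢ • μᵢ) B ≤ (∑ bᵢ • νᵢ) (thickening t B) + ∑ (aᵢ - bᵢ) + t`. Between probability measures
this one-sided inequality already bounds the Lévy–Prokhorov distance, and for probability
weights `∑ (αᵢ - βᵢ)⁺ = ½ ∑ |αᵢ - βᵢ|`.
-/

open MeasureTheory Metric
open scoped ENNReal

lemma sum_posPart_sub_eq_half_sum_abs_sub {ι : Type*} (s : Finset ι) {α β : ι → ℝ}
    (h : ∑ i ∈ s, α i = ∑ i ∈ s, β i) :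
    ∑ i ∈ s, (α i - β i)⁺ = (1 / 2) * ∑ i ∈ s, |α i - β i| := by
  have hsum : ∑ i ∈ s, (α i - β i) = 0 := by rw [Finset.sum_sub_distrib, h, sub_self]
  have htwo : ∀ x : ℝ, 2 * x⁺ = x + |x| := fun x => by
    rw [add_abs_eq_two_nsmul_posPart, two_nsmul, two_mul]
  have : 2 * ∑ i ∈ s, (α i - β i)⁺ = ∑ i ∈ s, |α i - β i| := by
    simp only [Finset.mul_sum, htwo, Finset.sum_add_distrib, hsum, zero_add]
  linarith

lemma sum_ofReal_sub_ofReal_eq_half_sum_abs_sub {ι : Type*} (s : Finset ι) {α β : ι → ℝ}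
    (hβ : ∀ i, 0 ≤ β i) (h : ∑ i ∈ s, α i = ∑ i ∈ s, β i) :
    ∑ i ∈ s, (ENNReal.ofReal (α i) - ENNReal.ofReal (β i)) =
      ENNReal.ofReal ((1 / 2) * ∑ i ∈ s, |α i - β i|) := by
  have hpos : ∀ i, ENNReal.ofReal (α i) - ENNReal.ofReal (β i) = ENNReal.ofReal (α i - β i)⁺ :=
    fun i => by rw [← ENNReal.ofReal_sub _ (hβ i), posPart_def, ENNReal.ofReal_max]; simp
  simp only [hpos]
  rw [← ENNReal.ofReal_sum_of_nonneg fun i _ => posPart_nonneg _,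
    sum_posPart_sub_eq_half_sum_abs_sub s h]

section Mixture

variable {X ι : Type*} [MeasurableSpace X] [Fintype ι]

lemma isProbabilityMeasure_sum_smul {a : ι → ℝ≥0∞} (ha : ∑ i, a i = 1)
    (μ : ι → Measure X) [∀ i, IsProbabilityMeasure (μ i)] :
    IsProbabilityMeasure (∑ i, a i • μ i) :=
  ⟨by simp [Measure.finsetSum_apply, ha]⟩

variable [PseudoMetricSpace X]

lemma sum_smul_apply_le_sum_smul_apply_thickening_add {a : ι → ℝ≥0∞} (ha : ∑ i, a i ≤ 1)
    (b : ι → ℝ≥0∞) {μ ν : ι → Measure X} [∀ i, IsProbabilityMeasure (ν i)] {t : ℝ≥0∞}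
    (ht : ∀ i, levyProkhorovEDist (μ i) (ν i) < t) {B : Set X} (hB : MeasurableSet B) :
    (∑ i, a i • μ i) B ≤ (∑ i, b i • ν i) (thickening t.toReal B) + (∑ i, (a i - b i) + t) := by
  set T := thickening t.toReal B
  have hterm : ∀ i, a i * μ i B ≤ b i * ν i T + (a i - b i) + a i * t := fun i =>
    calc a i * μ i B
        ≤ a i * ν i T + a i * t := by
          rw [← mul_add]
          exact mul_le_mul_right (left_measure_le_of_levyProkhorovEDist_lt (ht i) hB) _
      _ ≤ (b i + (a i - b i)) * ν i T + a i * t := by gcongr; exact le_add_tsub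
      _ ≤ b i * ν i T + (a i - b i) + a i * t := by
          rw [add_mul]; gcongr; exact mul_le_of_le_one_right' prob_le_one
  calc (∑ i, a i • μ i) B
      ≤ ∑ i, (b i * ν i T + (a i - b i) + a i * t) := by
        simp only [Measure.finsetSum_apply, Measure.smul_apply, smul_eq_mul]
        exact Finset.sum_le_sum fun i _ => hterm i
    _ = (∑ i, b i • ν i) T + ∑ i, (a i - b i) + (∑ i, a i) * t := by
        simp only [Finset.sum_add_distrib, Finset.sum_mul, Measure.finsetSum_apply,
          Measure.smul_apply, smul_eq_mul]
    _ ≤ (∑ i, b i • ν i) T + (∑ i, (a i - b i) + t) := by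
        rw [add_assoc]; gcongr; exact mul_le_of_le_one_left' ha

theorem levyProkhorovEDist_sum_smul_le [OpensMeasurableSpace X] {a b : ι → ℝ≥0∞} (ha : ∑ i, a i = 1)
    (hb : ∑ i, b i = 1) (μ ν : ι → Measure X) [∀ i, IsProbabilityMeasure (μ i)]
    [∀ i, IsProbabilityMeasure (ν i)] :
    levyProkhorovEDist (∑ i, a i • μ i) (∑ i, b i • ν i) ≤
      ∑ i, (a i - b i) + ⨆ i, levyProkhorovEDist (μ i) (ν i) := by
  have := isProbabilityMeasure_sum_smul ha μ
  have := isProbabilityMeasure_sum_smul hb ν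
  refine levyProkhorovEDist_le_of_forall_le _ _ _ fun ε B hε hε_top hB => ?_
  set M := ∑ i, (a i - b i)
  have hMε : M ≤ ε := le_self_add.trans hε.le
  have ht : ∀ i, levyProkhorovEDist (μ i) (ν i) < ε - M := fun i =>
    (le_iSup (fun i => levyProkhorovEDist (μ i) (ν i)) i).trans_lt (lt_tsub_iff_left.mpr hε)
  calc (∑ i, a i • μ i) B
      ≤ (∑ i, b i • ν i) (thickening (ε - M).toReal B) + (M + (ε - M)) :=
        sum_smul_apply_le_sum_smul_apply_thickening_add ha.le b ht hB
    _ ≤ (∑ i, b i • ν i) (thickening ε.toReal B) + ε := by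
        rw [add_tsub_cancel_of_le hMε]
        exact add_le_add_left (measure_mono <|
          thickening_mono (ENNReal.toReal_mono hε_top.ne tsub_le_self) B) _

end Mixture

theorem prokhorov_dist_convex_combination_general {X : Type*} [MetricSpace X]
    [MeasurableSpace X] [BorelSpace X] (k : ℕ)
    (α β : Fin k → ℝ) (hα0 : ∀ i, α i ∈ Set.Icc (0:ℝ) 1) (hβ0 : ∀ i, β i ∈ Set.Icc (0:ℝ) 1)
    (hα : ∑ i, α i = 1) (hβ : ∑ i, β i = 1)
    (μ ν : Fin k → Measure X)
    (hμ : ∀ i, IsProbabilityMeasure (μ i)) (hν : ∀ i, IsProbabilityMeasure (ν i)) :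
    levyProkhorovDist (∑ i, ENNReal.ofReal (α i) • μ i) (∑ i, ENNReal.ofReal (β i) • ν i) ≤
      (1 / 2) * ∑ i, |α i - β i| + ⨆ i, levyProkhorovDist (μ i) (ν i) := by
  have hsum_ofReal : ∀ γ : Fin k → ℝ, (∀ i, 0 ≤ γ i) → ∑ i, γ i = 1 →
      ∑ i, ENNReal.ofReal (γ i) = 1 := fun γ hγ0 hγ => by
    rw [← ENNReal.ofReal_sum_of_nonneg fun i _ => hγ0 i, hγ, ENNReal.ofReal_one]
  have hedist_le : ⨆ i, levyProkhorovEDist (μ i) (ν i) ≤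
      ENNReal.ofReal (⨆ i, levyProkhorovDist (μ i) (ν i)) := iSup_le fun i => by
    rw [← ENNReal.ofReal_toReal (levyProkhorovEDist_ne_top (μ i) (ν i))]
    exact ENNReal.ofReal_le_ofReal
      (le_ciSup (f := fun i => levyProkhorovDist (μ i) (ν i)) (Set.finite_range _).bddAbove i)
  have hD0 : 0 ≤ ⨆ i, levyProkhorovDist (μ i) (ν i) :=
    Real.iSup_nonneg fun _ => ENNReal.toReal_nonneg
  refine ENNReal.toReal_le_of_le_ofReal (add_nonneg (by positivity) hD0) ?_
  calc levyProkhorovEDist (∑ i, ENNReal.ofReal (α i) • μ i) (∑ i, ENNReal.ofReal (β i) • ν i)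
      ≤ ∑ i, (ENNReal.ofReal (α i) - ENNReal.ofReal (β i)) +
          ⨆ i, levyProkhorovEDist (μ i) (ν i) :=
        levyProkhorovEDist_sum_smul_le (hsum_ofReal α (fun i => (hα0 i).1) hα)
          (hsum_ofReal β (fun i => (hβ0 i).1) hβ) μ ν
    _ ≤ ENNReal.ofReal ((1 / 2) * ∑ i, |α i - β i|) +
          ENNReal.ofReal (⨆ i, levyProkhorovDist (μ i) (ν i)) := by
        rw [sum_ofReal_sub_ofReal_eq_half_sum_abs_sub _ (fun i => (hβ0 i).1) (hα.trans hβ.symm)]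
        gcongr
    _ = _ := (ENNReal.ofReal_add (by positivity) hD0).symm

/-- For convex combinations of Borel probability measures on a compact
metric space, the Prokhorov distance satisfies
`D_P(Σ αᵢ μᵢ, Σ βᵢ νᵢ) ≤ (1/2) Σ |αᵢ − βᵢ| + max_i D_P(μᵢ, νᵢ)`. -/
theorem prokhorov_dist_convex_combination {X : Type*} [MetricSpace X] [CompactSpace X]
    [MeasurableSpace X] [BorelSpace X] (k : ℕ)
    (α β : Fin k → ℝ) (hα0 : ∀ i, α i ∈ Set.Icc (0:ℝ) 1) (hβ0 : ∀ i, β i ∈ Set.Icc (0:ℝ) 1)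
    (hα : ∑ i, α i = 1) (hβ : ∑ i, β i = 1)
    (μ ν : Fin k → Measure X)
    (hμ : ∀ i, IsProbabilityMeasure (μ i)) (hν : ∀ i, IsProbabilityMeasure (ν i)) :
    levyProkhorovDist (∑ i, ENNReal.ofReal (α i) • μ i) (∑ i, ENNReal.ofReal (β i) • ν i) ≤
      (1 / 2) * ∑ i, |α i - β i| + ⨆ i, levyProkhorovDist (μ i) (ν i) :=
  prokhorov_dist_convex_combination_general k α β hα0 hβ0 hα hβ μ ν hμ hν
end

section
/- Let G be a countable amenable group acting on a compact metric space X, let (X,G) be a dynamical system, and let Z ⊆ closure(Gx) be a G-invariant (not necessarily closed) nonempty set. Then for every ε > 0 the set of return times N(x, Z^ε) = {g ∈ G : gx ∈ Z^ε} is right thick, where Z^ε is the open ε-neighborhood of Z. -/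
open Filter
open scoped symmDiff

/-- Let a countable amenable group `G` act continuously on a compact
metric space `X`, and let `Z ⊆ closure(Gx)` be a nonempty `G`-invariant set. Then for
every `ε > 0` the set of return times `N(x, Z^ε) = {g : g•x ∈ Z^ε}` is right thick. -/
theorem return_times_to_invariant_nbhd_thick {G X : Type*} [Group G] [Countable G]
    [DecidableEq G] [MetricSpace X] [CompactSpace X] [MulAction G X]
    (hcont : ∀ g : G, Continuous fun p : X => g • p)
    (hamen : ∃ F : ℕ → Finset G, (∀ n, (F n).Nonempty) ∧ ∀ a : G, Tendsto
      (fun n => ((((F n).image (a * ·)) ∆ (F n)).card : ℝ) / (F n).card) atTop (nhds 0))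
    (x : X) (Z : Set X) (hZne : Z.Nonempty)
    (hZsub : Z ⊆ closure (MulAction.orbit G x))
    (hZinv : ∀ g : G, ∀ z ∈ Z, g • z ∈ Z)
    (ε : ℝ) (hε : 0 < ε) :
    ∀ F : Finset G, ∃ γ : G, γ • x ∈ Metric.thickening ε Z ∧
      ∀ f ∈ F, (f⁻¹ * γ) • x ∈ Metric.thickening ε Z := by
  intro F
  obtain ⟨z, hz⟩ := hZne
  have hTopen : IsOpen (Metric.thickening ε Z) := Metric.isOpen_thickening
  have hzT : ∀ g : G, g • z ∈ Metric.thickening ε Z := fun g =>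
    Metric.self_subset_thickening hε Z (hZinv g z hz)
  set U : Set X := Metric.ball z ε ∩ ⋂ f ∈ F, (fun p : X => f⁻¹ • p) ⁻¹' Metric.thickening ε Z
    with hU
  have hUopen : IsOpen U :=
    Metric.isOpen_ball.inter (isOpen_biInter_finset fun f _ => hTopen.preimage (hcont f⁻¹))
  have hzU : z ∈ U := by
    refine ⟨Metric.mem_ball_self hε, ?_⟩
    simp only [Set.mem_iInter, Set.mem_preimage]
    intro f _
    exact hzT f⁻¹
  obtain ⟨y, hyU, hyO⟩ := mem_closure_iff.mp (hZsub hz) U hUopen hzU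
  obtain ⟨γ, rfl⟩ := hyO
  refine ⟨γ, ?_, ?_⟩
  · exact Metric.mem_thickening_iff.mpr ⟨z, hz, Metric.mem_ball.mp hyU.1⟩
  · intro f hf
    have := hyU.2
    simp only [Set.mem_iInter, Set.mem_preimage] at this
    have h := this f hf
    rwa [← mul_smul] at h
end

section
/- Let G be a countable amenable group, H a finite index subgroup of G, and K ⊆ G a fundamental domain for H (i.e. |Hg ∩ K| = 1 for every g ∈ G). If B ⊆ G is a union of right cosets of H (i.e. B = HB), then the upper and lower Banach densities of B coincide and equal |B ∩ K|/|K|. -/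
open Filter
open scoped symmDiff

/-- The upper Banach density `D*(A) = inf_{F finite nonempty} sup_{g ∈ G} |A ∩ Fg|/|F|`. -/
noncomputable def upperBanachDensity {G : Type*} [Group G] (A : Set G) : ℝ :=
  ⨅ F : {F : Finset G // F.Nonempty},
    ⨆ g : G, ((A ∩ ((fun f => f * g) '' (F.1 : Set G))).ncard : ℝ) / F.1.card

/-- The lower Banach density `D_*(A) = 1 − D*(G \ A)`. -/
noncomputable def lowerBanachDensity {G : Type*} [Group G] (A : Set G) : ℝ :=
  1 - upperBanachDensity Aᶜ

/-!
Every right translate `K g` of a right transversal `K` of `H` is again a right transversal, and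
a right transversal meets the `H`-invariant set `B` in exactly as many points as `B` has right
cosets. Testing the infimum at `F = K` thus gives `D*(B) ≤ |B ∩ K| / |K|` and
`D*(Bᶜ) ≤ 1 - |B ∩ K| / |K|`. Conversely, let `S` be a right transversal of the normal core `N`
of `H`. As `N` is normal, every left translate `f S` is again a right transversal of `N`, so
double counting gives `∑_{s ∈ S} |B ∩ F s| = |F| |B ∩ S|` and some `F s` meets `B` in at least
`|F| |B ∩ S| / |S|` points. Hence `D*(B) + D*(Bᶜ) ≥ 1`, which forces equality in both upper
bounds.
-/

open Classical in
theorem ncard_inter_image_eq_card_filter {α β : Type*} {f : α → β} (hf : Function.Injective f)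
    (A : Set β) (F : Finset α) : (A ∩ f '' F).ncard = (F.filter (f · ∈ A)).card := by
  rw [Set.inter_comm, ← Set.image_inter_preimage, Set.ncard_image_of_injective _ hf,
    ← Set.ncard_coe_finset, Finset.coe_filter]
  rfl

theorem ncard_compl_inter_div_card {α : Type*} (A : Set α) {T : Finset α} (hT : T.Nonempty) :
    ((Aᶜ ∩ T).ncard : ℝ) / T.card = 1 - (A ∩ T).ncard / T.card := by
  have hsplit := Set.ncard_inter_add_ncard_sdiff_eq_ncard (T : Set α) A
  rw [Set.sdiff_eq, Set.ncard_coe_finset, Set.inter_comm, Set.inter_comm _ Aᶜ] at hsplit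
  have hpos : (0 : ℝ) < T.card := by exact_mod_cast hT.card_pos
  rw [eq_sub_iff_add_eq, ← add_div, div_eq_one_iff_eq hpos.ne', add_comm]
  exact_mod_cast hsplit

namespace Subgroup

variable {G : Type*} [Group G]

theorem isComplement_iff_existsUnique_mem_mul_inv_mem {H : Subgroup G} {T : Set G} :
    IsComplement H T ↔ ∀ g : G, ∃! t, t ∈ T ∧ t * g⁻¹ ∈ H := by
  rw [isComplement_iff_existsUnique_mul_inv_mem]
  refine forall_congr' fun g => ?_
  have hsymm : ∀ t : G, g * t⁻¹ ∈ H ↔ t * g⁻¹ ∈ H := fun t => by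
    rw [← H.inv_mem_iff, mul_inv_rev, inv_inv]
  simp only [SetLike.mem_coe, hsymm]
  constructor
  · rintro ⟨⟨t, ht⟩, hg, huniq⟩
    exact ⟨t, ⟨ht, hg⟩, fun t' ⟨ht', hg'⟩ => congrArg Subtype.val (huniq ⟨t', ht'⟩ hg')⟩
  · rintro ⟨t, ⟨ht, hg⟩, huniq⟩
    exact ⟨⟨t, ht⟩, hg, fun t' hg' => Subtype.ext (huniq t' ⟨t'.2, hg'⟩)⟩

theorem IsComplement.image_mul_right {S T : Set G} (h : IsComplement S T) (g : G) :
    IsComplement S ((· * g) '' T) := by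
  let e : S × T ≃ S × ((· * g) '' T) :=
    (Equiv.refl S).prodCongr (Equiv.Set.image _ T (mul_left_injective g))
  have hcomp : (fun x : S × ((· * g) '' T) => x.1.1 * x.2.1) ∘ e =
      Equiv.mulRight g ∘ fun x : S × T => x.1.1 * x.2.1 :=
    funext fun x => (mul_assoc _ _ _).symm
  exact (e.bijective_comp _).mp (hcomp ▸ (Equiv.mulRight g).bijective.comp h)

theorem IsComplement.image_mul_left {N : Subgroup G} [N.Normal] {T : Set G}
    (h : IsComplement N T) (g : G) : IsComplement N ((g * ·) '' T) := by
  let e : N × T ≃ N × ((g * ·) '' T) :=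
    (MulAut.conjNormal g).toEquiv.prodCongr (Equiv.Set.image _ T (mul_right_injective g))
  have hcomp : (fun x : N × ((g * ·) '' T) => x.1.1 * x.2.1) ∘ e =
      Equiv.mulLeft g ∘ fun x : N × T => x.1.1 * x.2.1 :=
    funext fun x => by simp [e, MulAut.conjNormal_apply, mul_assoc]
  exact (e.bijective_comp _).mp (hcomp ▸ (Equiv.mulLeft g).bijective.comp h)

theorem IsComplement.ncard_inter_eq_ncard_image_mk {H : Subgroup G} {T B : Set G}
    (hT : IsComplement H T) (hB : ∀ g ∈ B, ∀ h ∈ H, h * g ∈ B) :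
    (B ∩ T).ncard = ((Quotient.mk'' : G → Quotient (QuotientGroup.rightRel H)) '' B).ncard := by
  have hinj : Set.InjOn (Quotient.mk'' : G → Quotient (QuotientGroup.rightRel H)) (B ∩ T) :=
    fun x hx y hy hxy => congrArg Subtype.val
      ((isComplement_subgroup_left_iff_bijective.mp hT).1 (a₁ := ⟨x, hx.2⟩) (a₂ := ⟨y, hy.2⟩) hxy)
  rw [← hinj.ncard_image]
  refine congrArg Set.ncard ((Set.image_mono Set.inter_subset_left).antisymm ?_)
  rintro _ ⟨b, hb, rfl⟩
  refine ⟨hT.toRightFun b, ⟨?_, (hT.toRightFun b).2⟩, hT.mk''_rightQuotientEquiv _⟩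
  simpa using hB b hb _ (hT.toRightFun_mul_inv_mem b)

theorem ncard_inter_eq_of_isComplement {H : Subgroup G} {T₁ T₂ B : Set G}
    (hT₁ : IsComplement H T₁) (hT₂ : IsComplement H T₂) (hB : ∀ g ∈ B, ∀ h ∈ H, h * g ∈ B) :
    (B ∩ T₁).ncard = (B ∩ T₂).ncard := by
  rw [hT₁.ncard_inter_eq_ncard_image_mk hB, hT₂.ncard_inter_eq_ncard_image_mk hB]

end Subgroup

section BanachDensity

open Subgroup

variable {G : Type*} [Group G]

theorem upperBanachDensity_le_of_forall_ncard_le {A : Set G} {F : Finset G} (hF : F.Nonempty)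
    {n : ℕ} (h : ∀ g : G, (A ∩ (· * g) '' (F : Set G)).ncard ≤ n) :
    upperBanachDensity A ≤ n / F.card := by
  refine (ciInf_le ⟨0, ?_⟩ (⟨F, hF⟩ : {F : Finset G // F.Nonempty})).trans (ciSup_le fun g => ?_)
  · rintro _ ⟨F', rfl⟩
    exact Real.iSup_nonneg fun g => by positivity
  · gcongr
    exact_mod_cast h g

theorem le_upperBanachDensity_of_forall_exists {A : Set G} {c : ℝ}
    (h : ∀ F : Finset G, F.Nonempty → ∃ g : G, c * F.card ≤ (A ∩ (· * g) '' (F : Set G)).ncard) :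
    c ≤ upperBanachDensity A := by
  have : Nonempty {F : Finset G // F.Nonempty} := ⟨⟨{1}, Finset.singleton_nonempty 1⟩⟩
  refine le_ciInf fun ⟨F, hF⟩ => ?_
  have hpos : (0 : ℝ) < F.card := by exact_mod_cast hF.card_pos
  have hbdd : BddAbove (Set.range fun g : G =>
      ((A ∩ (· * g) '' (F : Set G)).ncard : ℝ) / F.card) := by
    refine ⟨1, ?_⟩
    rintro _ ⟨g, rfl⟩
    rw [div_le_one hpos]
    exact_mod_cast (Set.ncard_inter_le_ncard_right _ _ (Set.toFinite _)).trans
      ((Set.ncard_image_le (Set.toFinite _)).trans (Set.ncard_coe_finset F).le)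
  obtain ⟨g, hg⟩ := h F hF
  exact ((le_div_iff₀ hpos).2 hg).trans (le_ciSup hbdd g)

theorem sum_ncard_inter_image_mul_right (A : Set G) (F S : Finset G) :
    ∑ s ∈ S, (A ∩ (· * s) '' (F : Set G)).ncard =
      ∑ f ∈ F, (A ∩ (f * ·) '' (S : Set G)).ncard := by
  classical
  simp only [ncard_inter_image_eq_card_filter (mul_left_injective _),
    ncard_inter_image_eq_card_filter (mul_right_injective _), Finset.card_filter]
  exact Finset.sum_comm

theorem upperBanachDensity_le_of_isComplement {H : Subgroup G} {K : Finset G}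
    (hK : IsComplement H (K : Set G)) {B : Set G} (hB : ∀ g ∈ B, ∀ h ∈ H, h * g ∈ B) :
    upperBanachDensity B ≤ (B ∩ K).ncard / K.card :=
  upperBanachDensity_le_of_forall_ncard_le (Finset.coe_nonempty.mp hK.nonempty_right) fun g =>
    (ncard_inter_eq_of_isComplement (hK.image_mul_right g) hK hB).le

theorem le_upperBanachDensity_of_isComplement {N : Subgroup G} [N.Normal] {S : Finset G}
    (hS : IsComplement N (S : Set G)) {B : Set G} (hB : ∀ g ∈ B, ∀ h ∈ N, h * g ∈ B) :
    ((B ∩ S).ncard : ℝ) / S.card ≤ upperBanachDensity B := by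
  have hSne : S.Nonempty := Finset.coe_nonempty.mp hS.nonempty_right
  have hpos : (0 : ℝ) < S.card := by exact_mod_cast hSne.card_pos
  refine le_upperBanachDensity_of_forall_exists fun F _ => ?_
  have hsum : ∑ s ∈ S, (B ∩ (· * s) '' (F : Set G)).ncard = F.card * (B ∩ S).ncard := by
    rw [sum_ncard_inter_image_mul_right, Finset.sum_congr rfl fun f _ =>
      ncard_inter_eq_of_isComplement (hS.image_mul_left f) hS hB, Finset.sum_const, smul_eq_mul]
  obtain ⟨s, -, hs⟩ := Finset.exists_le_of_sum_le hSne
    (f := fun _ => ((B ∩ S).ncard : ℝ) / S.card * F.card)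
    (g := fun s => ((B ∩ (· * s) '' (F : Set G)).ncard : ℝ)) (by
      rw [Finset.sum_const, nsmul_eq_mul, ← Nat.cast_sum, hsum, Nat.cast_mul]
      exact le_of_eq (by field_simp))
  exact ⟨s, hs⟩

theorem upperBanachDensity_eq_of_isComplement {H : Subgroup G} [H.FiniteIndex] {K : Finset G}
    (hK : IsComplement H (K : Set G)) {B : Set G} (hB : ∀ g ∈ B, ∀ h ∈ H, h * g ∈ B) :
    upperBanachDensity B = (B ∩ K).ncard / K.card ∧
      upperBanachDensity Bᶜ = 1 - (B ∩ K).ncard / K.card := by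
  obtain ⟨S, hS, -⟩ := H.normalCore.exists_isComplement_right 1
  lift S to Finset G using hS.finite_right
  have hBc : ∀ g ∈ Bᶜ, ∀ h ∈ H, h * g ∈ Bᶜ := fun g hg h hh hhg =>
    hg (by simpa using hB _ hhg _ (H.inv_mem hh))
  have hBN := fun g hg h hh => hB g hg h (H.normalCore_le hh)
  have hBcN := fun g hg h hh => hBc g hg h (H.normalCore_le hh)
  have hKne := Finset.coe_nonempty.mp hK.nonempty_right
  have hSne := Finset.coe_nonempty.mp hS.nonempty_right
  have hupper := upperBanachDensity_le_of_isComplement hK hB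
  have hupper_compl := upperBanachDensity_le_of_isComplement hK hBc
  have hlower := le_upperBanachDensity_of_isComplement hS hBN
  have hlower_compl := le_upperBanachDensity_of_isComplement hS hBcN
  rw [ncard_compl_inter_div_card _ hKne] at hupper_compl
  rw [ncard_compl_inter_div_card _ hSne] at hlower_compl
  constructor <;> linarith

end BanachDensity

theorem banach_density_of_union_of_cosets_general {G : Type*} [Group G]
    (H : Subgroup G) (hfi : H.FiniteIndex)
    (K : Finset G) (hK : ∀ g : G, ∃! k, k ∈ K ∧ k * g⁻¹ ∈ H)
    (B : Set G) (hB : ∀ g ∈ B, ∀ h ∈ H, h * g ∈ B) :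
    upperBanachDensity B = ((B ∩ ↑K).ncard : ℝ) / K.card ∧
      lowerBanachDensity B = ((B ∩ ↑K).ncard : ℝ) / K.card := by
  have hK' := Subgroup.isComplement_iff_existsUnique_mem_mul_inv_mem.mpr hK
  obtain ⟨hB_eq, hBc_eq⟩ := upperBanachDensity_eq_of_isComplement hK' hB
  exact ⟨hB_eq, by rw [lowerBanachDensity, hBc_eq, sub_sub_cancel]⟩

/-- In a countable amenable group `G`, if `H` is a finite index
subgroup, `K` a fundamental domain for `H` (each right coset `Hg` meets `K` exactly
once), and `B` a union of right cosets of `H`, then the upper and lower Banach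
densities of `B` coincide and equal `|B ∩ K|/|K|`. -/
theorem banach_density_of_union_of_cosets {G : Type*} [Group G] [Countable G] [DecidableEq G]
    (hamen : ∃ F : ℕ → Finset G, (∀ n, (F n).Nonempty) ∧ ∀ a : G, Tendsto
      (fun n => ((((F n).image (a * ·)) ∆ (F n)).card : ℝ) / (F n).card) atTop (nhds 0))
    (H : Subgroup G) (hfi : H.FiniteIndex)
    (K : Finset G) (hK : ∀ g : G, ∃! k, k ∈ K ∧ k * g⁻¹ ∈ H)
    (B : Set G) (hB : ∀ g ∈ B, ∀ h ∈ H, h * g ∈ B) :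
    upperBanachDensity B = ((B ∩ ↑K).ncard : ℝ) / K.card ∧
      lowerBanachDensity B = ((B ∩ ↑K).ncard : ℝ) / K.card :=
  banach_density_of_union_of_cosets_general H hfi K hK B hB
end

section
/- Let G be a group, F and K finite subsets of G with e ∈ K, and ε > 0. If F is (K, ε/|K|)-invariant, i.e. |KF △ F| ≤ (ε/|K|)|F|, then |{s ∈ F : Ks ⊆ F}| ≥ (1−ε)|F|. -/
open scoped symmDiff Pointwise

/-- If `e ∈ K` and `F` is `(K, ε/|K|)`-invariant, i.e.
`|KF ∆ F| ≤ (ε/|K|)|F|`, then `|{s ∈ F : Ks ⊆ F}| ≥ (1 − ε)|F|`. -/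
theorem invariant_core_card_ge {G : Type*} [Group G] [DecidableEq G]
    (F K : Finset G) (hne : F.Nonempty) (heK : (1 : G) ∈ K)
    (ε : ℝ) (hε : 0 < ε)
    (hinv : (((K * F) ∆ F).card : ℝ) ≤ ε / K.card * F.card) :
    (1 - ε) * (F.card : ℝ) ≤ ((F.filter fun s => ∀ k ∈ K, k * s ∈ F).card : ℝ) := by
  set Good := F.filter fun s => ∀ k ∈ K, k * s ∈ F with hGood
  set S := (K * F) \ F with hS
  have hsub : F \ Good ⊆ K⁻¹ * S := by
    intro s hs
    simp only [Finset.mem_sdiff, hGood, Finset.mem_filter, not_and, not_forall] at hs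
    obtain ⟨hsF, h⟩ := hs
    obtain ⟨k, hk, hks⟩ := h hsF
    have hmem : k * s ∈ S := by
      simp only [hS, Finset.mem_sdiff]
      exact ⟨Finset.mul_mem_mul hk hsF, hks⟩
    have : s = k⁻¹ * (k * s) := by group
    rw [this]
    exact Finset.mul_mem_mul (Finset.inv_mem_inv hk) hmem
  have hcard1 : (F \ Good).card ≤ K.card * S.card := by
    calc (F \ Good).card ≤ (K⁻¹ * S).card := Finset.card_le_card hsub
      _ ≤ K⁻¹.card * S.card := Finset.card_mul_le
      _ = K.card * S.card := by rw [Finset.card_inv]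
  have hSsub : S ⊆ (K * F) ∆ F := by
    intro x hx
    rw [Finset.mem_symmDiff]
    simp only [hS, Finset.mem_sdiff] at hx
    exact Or.inl hx
  have hcard2 : (S.card : ℝ) ≤ ε / K.card * F.card :=
    le_trans (by exact_mod_cast Finset.card_le_card hSsub) hinv
  have hKpos : (0 : ℝ) < K.card := by
    exact_mod_cast Finset.card_pos.mpr ⟨1, heK⟩
  have hbad : ((F \ Good).card : ℝ) ≤ ε * F.card := by
    calc ((F \ Good).card : ℝ) ≤ (K.card : ℝ) * S.card := by exact_mod_cast hcard1
      _ ≤ (K.card : ℝ) * (ε / K.card * F.card) := by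
          exact mul_le_mul_of_nonneg_left hcard2 hKpos.le

      _ = ε * F.card := by field_simp
  have hGsub : Good ⊆ F := Finset.filter_subset _ _
  have hsplit : ((F \ Good).card : ℝ) + Good.card = F.card := by
    exact_mod_cast congrArg (Nat.cast : ℕ → ℝ) (Finset.card_sdiff_add_card_eq_card hGsub)
  nlinarith [hbad, hsplit]
end

section
/- Conversely, if η ∈ A^G is a Toeplitz configuration with respect to a nested sequence {H_n} of finite index subgroups of a countable group G (i.e. ∪_n Per_{H_n}(η) = G), then there exists f : Ĝ → A, where Ĝ is the G-odometer lim← G/H_n with natural map φ : G → Ĝ, such that η(g) = f(φ(g)) for every g ∈ G, and every point of φ(G) lies in a cylinder on which f is constant. -/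
/-- The `G`-odometer associated with a nested sequence of subgroups: the inverse limit
of the quotients `G ⧸ H n`, realized as compatible sequences of cosets. -/
def Odometer {G : Type*} [Group G] (H : ℕ → Subgroup G) : Type _ :=
  {u : ∀ n, G ⧸ H n //
    ∀ (n : ℕ) (g : G), u (n + 1) = (QuotientGroup.mk g : G ⧸ H (n + 1)) →
      u n = (QuotientGroup.mk g : G ⧸ H n)}

/-- The natural map `φ : G → Ĝ`, `φ(g) = (gHₙ)ₙ`. -/
def odometerMap {G : Type*} [Group G] (H : ℕ → Subgroup G) (hnest : ∀ n, H (n + 1) ≤ H n)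
    (g : G) : Odometer H :=
  ⟨fun n => (QuotientGroup.mk g : G ⧸ H n), by
    intro n g' h
    rw [QuotientGroup.eq] at h ⊢
    exact hnest n h⟩

/-- If `η ∈ A^G` is a Toeplitz configuration with respect to a nested
sequence `{H n}` of finite index subgroups of a countable group `G`
(`⋃ₙ Per_{Hₙ}(η) = G`), then there is `f : Ĝ → A` on the odometer `Ĝ` with
`η(g) = f(φ(g))` for all `g`, and `f` is constant on a cylinder around every point
of `φ(G)`. -/
theorem cylinder_constant_of_toeplitz {G A : Type*} [Group G] [Countable G] [Finite A]
    (H : ℕ → Subgroup G) (hnorm : ∀ n, (H n).Normal) (hfi : ∀ n, (H n).FiniteIndex)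
    (hnest : ∀ n, H (n + 1) ≤ H n)
    (η : G → A)
    (htoep : ∀ g : G, ∃ n : ℕ, ∀ h ∈ H n, η (h * g) = η g) :
    ∃ f : Odometer H → A,
      (∀ g : G, η g = f (odometerMap H hnest g)) ∧
      (∀ g : G, ∃ k : ℕ, ∀ u : Odometer H,
        u.1 k = (QuotientGroup.mk g : G ⧸ H k) → f u = f (odometerMap H hnest g)) := by
  classical
  have descend : ∀ (u : Odometer H) (k m : ℕ), k ≤ m → ∀ g : G,
      u.1 m = (QuotientGroup.mk g : G ⧸ H m) → u.1 k = (QuotientGroup.mk g : G ⧸ H k) := by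
    intro u k m hkm
    induction m with
    | zero => intro g h; rwa [Nat.le_zero.mp hkm]
    | succ m ih =>
      intro g h
      rcases Nat.lt_or_ge k (m + 1) with hlt | hge
      · exact ih (Nat.lt_succ_iff.mp hlt) g (u.2 m g h)
      · have hk : k = m + 1 := le_antisymm hkm hge
        rwa [hk]
  have base : ∀ (k : ℕ) (g g' : G),
      (QuotientGroup.mk g : G ⧸ H k) = QuotientGroup.mk g' →
      (∀ h ∈ H k, η (h * g) = η g) → η g = η g' := by
    intro k g g' heq hper
    rw [QuotientGroup.eq] at heq
    have hmem : g' * g⁻¹ ∈ H k := by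
      have := (hnorm k).conj_mem _ heq g
      simpa [mul_assoc] using this
    have : η ((g' * g⁻¹) * g) = η g := hper _ hmem
    simpa [mul_assoc] using this.symm
  set P : Odometer H → G → Prop := fun u g =>
    ∃ k, u.1 k = (QuotientGroup.mk g : G ⧸ H k) ∧ ∀ h ∈ H k, η (h * g) = η g with hP
  have key : ∀ u g g', P u g → P u g' → η g = η g' := by
    rintro u g g' ⟨k, hk, hper⟩ ⟨m, hm, hper'⟩
    rcases le_total k m with hkm | hmk
    · have hk' := descend u k m hkm g' hm
      rw [hk] at hk'
      exact base k g g' hk' hper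
    · have hm' := descend u m k hmk g hk
      rw [hm] at hm'
      exact (base m g' g hm' hper').symm
  refine ⟨fun u => if h : ∃ g, P u g then η h.choose else η 1, ?_, ?_⟩
  all_goals
    have hf : ∀ (u : Odometer H) (g : G), P u g →
        (if h : ∃ g, P u g then η h.choose else η 1) = η g := by
      intro u g hg
      have hex : ∃ g, P u g := ⟨g, hg⟩
      rw [dif_pos hex]
      exact key u _ g hex.choose_spec hg
  · intro g
    obtain ⟨n, hn⟩ := htoep g
    dsimp only
    exact (hf (odometerMap H hnest g) g ⟨n, rfl, hn⟩).symm
  · intro g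
    obtain ⟨n, hn⟩ := htoep g
    refine ⟨n, fun u hu => ?_⟩
    dsimp only
    rw [hf u g ⟨n, hu, hn⟩, hf (odometerMap H hnest g) g ⟨n, rfl, hn⟩]
end

section
/- Let G be a countable amenable group and A a finite alphabet, with G acting on A^G by the shift. Every regular Toeplitz configuration x ∈ A^G is a limit, with respect to the Weyl pseudometric D* (equivalently, D*({g : x_g ≠ y_g}) → 0), of a sequence of periodic configurations, where y ∈ A^G is periodic if Per_H(y) = G for some finite index subgroup H of G. -/
/-!
Choose `n` with `D*(Per_{Hₙ}(x)) > 1 - ε` and let `y` copy `x` from one representative of each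
right coset of `Hₙ`: then `y` is `Hₙ`-periodic and agrees with `x` on `Per_{Hₙ}(x)`. That set is a
union of right cosets of `Hₙ`, and for such a union `S` every translate `Tg` of a transversal `T`
meets `S` in exactly as many points as there are cosets in `S`; testing the density on `T` gives
`D*(S) + D*(Sᶜ) ≤ 1`, hence `D*({x ≠ y}) ≤ D*(Per_{Hₙ}(x)ᶜ) < ε`.
-/

open Filter
open scoped symmDiff

section UpperBanachDensity

variable {G : Type*} [Group G]

lemma ncard_inter_image_mul_right_le (A : Set G) (F : Finset G) (g : G) :
    (A ∩ (fun f => f * g) '' (F : Set G)).ncard ≤ F.card :=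
  calc (A ∩ (fun f => f * g) '' (F : Set G)).ncard
      ≤ ((fun f => f * g) '' (F : Set G)).ncard :=
        Set.ncard_le_ncard Set.inter_subset_right ((F.finite_toSet).image _)
    _ = F.card := by rw [Set.ncard_image_of_injective _ (mul_left_injective g),
        Set.ncard_coe_finset]

lemma bddBelow_range_iSup_density (A : Set G) :
    BddBelow (Set.range fun F : {F : Finset G // F.Nonempty} =>
      ⨆ g : G, ((A ∩ (fun f => f * g) '' (F.1 : Set G)).ncard : ℝ) / F.1.card) :=
  ⟨0, by rintro _ ⟨F, rfl⟩; exact Real.iSup_nonneg fun g => by positivity⟩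

lemma upperBanachDensity_le_of_ncard_le {A : Set G} {F : Finset G} (hF : F.Nonempty) {c : ℕ}
    (hc : ∀ g : G, (A ∩ (fun f => f * g) '' (F : Set G)).ncard ≤ c) :
    upperBanachDensity A ≤ c / F.card :=
  (ciInf_le (bddBelow_range_iSup_density A) ⟨F, hF⟩).trans <|
    ciSup_le fun g => by gcongr; exact hc g

lemma upperBanachDensity_mono {A B : Set G} (h : A ⊆ B) :
    upperBanachDensity A ≤ upperBanachDensity B := by
  refine ciInf_mono (bddBelow_range_iSup_density A) fun F => ciSup_mono ⟨1, ?_⟩ fun g => ?_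
  · rintro _ ⟨g, rfl⟩
    rw [div_le_one (by exact_mod_cast F.2.card_pos)]
    exact_mod_cast ncard_inter_image_mul_right_le B F.1 g
  · gcongr
    exact ((F.1.finite_toSet).image _).subset Set.inter_subset_right

lemma upperBanachDensity_preimage_inv_le (H : Subgroup G) [H.FiniteIndex] (S : Set (G ⧸ H)) :
    upperBanachDensity {g : G | ((g⁻¹ : G) : G ⧸ H) ∈ S} ≤ S.ncard / Nat.card (G ⧸ H) := by
  set rep : G ⧸ H → G := fun q => q.out⁻¹
  have hrep : rep.Injective := inv_injective.comp Quotient.out_injective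
  have : Fintype (G ⧸ H) := Fintype.ofFinite _
  have : Nonempty (G ⧸ H) := ⟨((1 : G) : G ⧸ H)⟩
  set T : Finset G := Finset.univ.map ⟨rep, hrep⟩
  have hT : T.card = Nat.card (G ⧸ H) := by
    rw [Finset.card_map, Finset.card_univ, Nat.card_eq_fintype_card]
  rw [← hT]
  refine upperBanachDensity_le_of_ncard_le (Finset.univ_nonempty (α := G ⧸ H)).map
    fun g => le_of_eq ?_
  set ψ : G ⧸ H → G := fun q => rep q * g
  have hψ : ψ.Injective := (mul_left_injective g).comp hrep
  have hcoset : ∀ q, (((ψ q)⁻¹ : G) : G ⧸ H) = g⁻¹ • q := fun q => by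
    conv_rhs => rw [← QuotientGroup.out_eq' q, MulAction.Quotient.smul_mk]
    simp [ψ, rep]
  calc ({g : G | ((g⁻¹ : G) : G ⧸ H) ∈ S} ∩ (fun f => f * g) '' (T : Set G)).ncard
      = (ψ '' (ψ ⁻¹' {g : G | ((g⁻¹ : G) : G ⧸ H) ∈ S})).ncard := by
        rw [Set.image_preimage_eq_inter_range, Finset.coe_map, Finset.coe_univ, Set.image_univ,
          ← Set.range_comp]; rfl
    _ = ((fun q => g⁻¹ • q) ⁻¹' S).ncard := by
        rw [Set.ncard_image_of_injective _ hψ]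
        congr 1
        ext q
        simp only [Set.mem_preimage, Set.mem_ofPred_eq, hcoset]
    _ = S.ncard := by rw [Set.preimage_smul, Set.ncard_smul_set]

lemma upperBanachDensity_add_compl_le_one (H : Subgroup G) [H.FiniteIndex] {A : Set G}
    (hA : ∀ h ∈ H, ∀ g : G, h * g ∈ A ↔ g ∈ A) :
    upperBanachDensity A + upperBanachDensity Aᶜ ≤ 1 := by
  set π : G → G ⧸ H := fun g => ((g⁻¹ : G) : G ⧸ H)
  have hA_eq : A = π ⁻¹' (π '' A) := by
    refine (Set.subset_preimage_image π A).antisymm ?_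
    rintro g ⟨a, ha, hag⟩
    have hmem : g * a⁻¹ ∈ H := by simpa [π, QuotientGroup.eq] using hag.symm
    simpa using (hA _ hmem a).mpr ha
  have hcard := Set.ncard_add_ncard_compl (π '' A)
  have hpos : (0 : ℝ) < Nat.card (G ⧸ H) := by exact_mod_cast Nat.card_pos
  rw [hA_eq, ← Set.preimage_compl]
  calc _ ≤ ((π '' A).ncard : ℝ) / Nat.card (G ⧸ H) + ((π '' A)ᶜ.ncard : ℝ) / Nat.card (G ⧸ H) :=
        add_le_add (upperBanachDensity_preimage_inv_le H _)
          (upperBanachDensity_preimage_inv_le H _)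
    _ = 1 := by rw [← add_div, ← Nat.cast_add, hcard, div_self hpos.ne']

end UpperBanachDensity

section Periodic

variable {G A : Type*} [Group G]

def periodSet (H : Subgroup G) (x : G → A) : Set G :=
  {g | ∀ γ ∈ H, x (γ * g) = x g}

lemma mul_mem_periodSet_iff {H : Subgroup G} {x : G → A} {h : G} (hh : h ∈ H) (g : G) :
    h * g ∈ periodSet H x ↔ g ∈ periodSet H x := by
  suffices key : ∀ h ∈ H, ∀ g, g ∈ periodSet H x → h * g ∈ periodSet H x from
    ⟨fun hg => by simpa using key h⁻¹ (H.inv_mem hh) _ hg, key h hh g⟩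
  intro h hh g hg γ hγ
  rw [← mul_assoc, hg _ (H.mul_mem hγ hh), hg h hh]

-- Right cosets `Hg` are handled as the left cosets `g⁻¹H`, so that `G ⧸ H` can be used.
noncomputable def periodicCopy (H : Subgroup G) (x : G → A) (g : G) : A :=
  x (((g⁻¹ : G) : G ⧸ H).out)⁻¹

lemma periodicCopy_mul_left {H : Subgroup G} (x : G → A) {h : G} (hh : h ∈ H) (g : G) :
    periodicCopy H x (h * g) = periodicCopy H x g := by
  have hcoset : (((h * g)⁻¹ : G) : G ⧸ H) = ((g⁻¹ : G) : G ⧸ H) :=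
    QuotientGroup.eq.mpr (by simpa using hh)
  rw [periodicCopy, hcoset, periodicCopy]

lemma periodicCopy_eq_of_mem_periodSet {H : Subgroup G} {x : G → A} {g : G}
    (hg : g ∈ periodSet H x) : periodicCopy H x g = x g := by
  have hmem : g * ((g⁻¹ : G) : G ⧸ H).out ∈ H := by
    simpa using QuotientGroup.eq.mp (QuotientGroup.out_eq' ((g⁻¹ : G) : G ⧸ H)).symm
  simpa [periodicCopy, mul_assoc] using hg _ (H.inv_mem hmem)

end Periodic

theorem regular_toeplitz_weyl_limit_of_periodic_general {G A : Type*} [Group G]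
    (x : G → A)
    (H : ℕ → Subgroup G) (hfi : ∀ n, (H n).FiniteIndex)
    (hreg : (⨆ n : ℕ, upperBanachDensity {g : G | ∀ γ ∈ H n, x (γ * g) = x g}) = 1) :
    ∀ ε > (0 : ℝ), ∃ y : G → A,
      (∃ H' : Subgroup G, H'.FiniteIndex ∧ ∀ g : G, ∀ h ∈ H', y (h * g) = y g) ∧
      upperBanachDensity {g : G | x g ≠ y g} < ε := by
  intro ε hε
  have hsup : 1 - ε < ⨆ n, upperBanachDensity (periodSet (H n) x) := by
    unfold periodSet; rw [hreg]; linarith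
  obtain ⟨n, hn⟩ := exists_lt_of_lt_ciSup hsup
  have := hfi n
  refine ⟨periodicCopy (H n) x, ⟨H n, hfi n, fun g h hh => periodicCopy_mul_left x hh g⟩, ?_⟩
  have hdisagree : {g | x g ≠ periodicCopy (H n) x g} ⊆ (periodSet (H n) x)ᶜ :=
    fun g hne hg => hne (periodicCopy_eq_of_mem_periodSet hg).symm
  have hsum := upperBanachDensity_add_compl_le_one (H n)
    fun h hh g => mul_mem_periodSet_iff (x := x) hh g
  linarith [upperBanachDensity_mono hdisagree]

/-- In a countable amenable group `G` with finite alphabet `A`, every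
regular Toeplitz configuration `x` (there is a nested sequence `{H n}` of finite index
subgroups with `⋃ₙ Per_{Hₙ}(x) = G` and `supₙ D*(Per_{Hₙ}(x)) = 1`) is a limit, in the
Weyl pseudometric `D*({g : x g ≠ y g})`, of periodic configurations. -/
theorem regular_toeplitz_weyl_limit_of_periodic {G A : Type*} [Group G] [Countable G]
    [DecidableEq G] [Finite A]
    (hamen : ∃ F : ℕ → Finset G, (∀ n, (F n).Nonempty) ∧ ∀ a : G, Tendsto
      (fun n => ((((F n).image (a * ·)) ∆ (F n)).card : ℝ) / (F n).card) atTop (nhds 0))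
    (x : G → A)
    (H : ℕ → Subgroup G) (hfi : ∀ n, (H n).FiniteIndex) (hnest : ∀ n, H (n + 1) ≤ H n)
    (hcover : ∀ g : G, ∃ n : ℕ, ∀ γ ∈ H n, x (γ * g) = x g)
    (hreg : (⨆ n : ℕ, upperBanachDensity {g : G | ∀ γ ∈ H n, x (γ * g) = x g}) = 1) :
    ∀ ε > (0 : ℝ), ∃ y : G → A,
      (∃ H' : Subgroup G, H'.FiniteIndex ∧ ∀ g : G, ∀ h ∈ H', y (h * g) = y g) ∧
      upperBanachDensity {g : G | x g ≠ y g} < ε :=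
  regular_toeplitz_weyl_limit_of_periodic_general x H hfi hreg
end

section
/- Let G be a countable amenable group and A a finite alphabet. The topological entropy function x ↦ h_top(closure of the G-orbit of x, G) on A^G is continuous with respect to the pseudometric D*(x, x') = upper Banach density of {g ∈ G : x_g ≠ x'_g}. Quantitatively: for every ε > 0 there is δ ∈ (0,1/4) such that E_S(2δ) < ε and D*(x,x') < δ implies |h_top(closure Gx) − h_top(closure Gx')| ≤ 2δ log|A| + log 2 · E_S(2δ). -/
open Filter
open scoped symmDiff

/-- The number of patterns of shape `F` occurring in the configuration `x : G → A`
(with the shift `(g·x)(h) = x(hg)`, the pattern at position `g` is `f ↦ x (f * g)`). -/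
noncomputable def numPatterns {G A : Type*} [Group G] (x : G → A) (F : Finset G) : ℕ :=
  Set.ncard {p : {a : G // a ∈ F} → A | ∃ g : G, ∀ f : {a : G // a ∈ F}, p f = x (f.1 * g)}

/-- The topological entropy of the orbit closure of `x`, computed along the Følner
sequence `F` as `lim log|B_{F n}(x)| / |F n|`. -/
noncomputable def orbitEntropy {G A : Type*} [Group G] (F : ℕ → Finset G) (x : G → A) : ℝ :=
  Filter.limsup (fun n => Real.log (numPatterns x (F n)) / (F n).card) atTop

/-- The binary entropy function `E_S(t) = −t log₂ t − (1−t) log₂(1−t)`. -/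
noncomputable def binEntropy (t : ℝ) : ℝ :=
  -t * Real.logb 2 t - (1 - t) * Real.logb 2 (1 - t)

/-!
If `x` and `x'` disagree on a set of upper Banach density below `δ`, a single window `F₀`
witnesses this, and averaging over the `F₀`-translates shows that for a sufficiently invariant
Følner set `E` every right translate of `E` meets the disagreement set in at most `2δ|E|` points.
Hence every `E`-pattern of `x'` lies within Hamming distance `2δ|E|` of an `E`-pattern of `x`.
A Hamming ball of that radius has at most `|A|^{2δ|E|} · e^{|E| H(2δ)}` points (binomial tail
bound), so `log|B_E(x')| ≤ log|B_E(x)| + |E| (2δ log|A| + H(2δ))`; dividing by `|E|` and passing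
to the limsup gives one inequality, and symmetry gives the other.
-/

open Finset

lemma log_two_mul_binEntropy (t : ℝ) : Real.log 2 * binEntropy t = Real.binEntropy t := by
  simp only [binEntropy, Real.binEntropy, Real.logb, Real.log_inv]
  field_simp
  ring

lemma exists_binEntropy_two_mul_lt {ε : ℝ} (hε : 0 < ε) :
    ∃ δ : ℝ, 0 < δ ∧ δ < 1 / 4 ∧ binEntropy (2 * δ) < ε := by
  have hcont : Continuous fun δ : ℝ => binEntropy (2 * δ) := by
    have hdiv : ∀ t, binEntropy t = Real.binEntropy t / Real.log 2 := fun t => by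
      rw [← log_two_mul_binEntropy]; field_simp
    simp only [hdiv]
    fun_prop
  have hlim : Tendsto (fun δ : ℝ => binEntropy (2 * δ)) (nhdsWithin 0 (Set.Ioi 0)) (nhds 0) := by
    simpa [binEntropy] using (hcont.tendsto 0).mono_left nhdsWithin_le_nhds
  obtain ⟨δ, hδε, hδ, hδ0⟩ := ((hlim.eventually (gt_mem_nhds hε)).and
    ((eventually_nhdsWithin_of_eventually_nhds (gt_mem_nhds (by norm_num : (0 : ℝ) < 1 / 4))).and
      self_mem_nhdsWithin)).exists
  exact ⟨δ, hδ0, hδ, hδε⟩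

lemma sum_range_choose_mul_pow_le_one {n m : ℕ} (hmn : m ≤ n) {p : ℝ} (hp0 : 0 ≤ p)
    (hp : p ≤ 1 - p) :
    (∑ k ∈ range (m + 1), (n.choose k : ℝ)) * (p ^ m * (1 - p) ^ (n - m)) ≤ 1 := by
  have hq : 0 ≤ 1 - p := hp0.trans hp
  have hterm : ∀ k ≤ m, p ^ m * (1 - p) ^ (n - m) ≤ p ^ k * (1 - p) ^ (n - k) := fun k hk =>
    calc p ^ m * (1 - p) ^ (n - m) = p ^ k * p ^ (m - k) * (1 - p) ^ (n - m) := by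
          rw [← pow_add, Nat.add_sub_cancel' hk]
      _ ≤ p ^ k * (1 - p) ^ (m - k) * (1 - p) ^ (n - m) := by gcongr
      _ = p ^ k * (1 - p) ^ (n - k) := by rw [mul_assoc, ← pow_add]; congr 2; omega
  calc (∑ k ∈ range (m + 1), (n.choose k : ℝ)) * (p ^ m * (1 - p) ^ (n - m))
      ≤ ∑ k ∈ range (m + 1), p ^ k * (1 - p) ^ (n - k) * n.choose k := by
        rw [sum_mul]
        refine sum_le_sum fun k hk => ?_
        rw [mul_comm]
        exact mul_le_mul_of_nonneg_right (hterm k (by simpa [Nat.lt_succ_iff] using hk))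
          (Nat.cast_nonneg _)
    _ ≤ ∑ k ∈ range (n + 1), p ^ k * (1 - p) ^ (n - k) * n.choose k :=
        sum_le_sum_of_subset_of_nonneg (range_subset_range.2 (by omega))
          fun _ _ _ => by have := pow_nonneg hq; positivity
    _ = 1 := by rw [← add_pow, add_sub_cancel, one_pow]

lemma log_sum_range_choose_le {n m : ℕ} {p : ℝ} (hp0 : 0 < p) (hp : p ≤ 1 / 2)
    (hm : (m : ℝ) ≤ p * n) :
    Real.log (∑ k ∈ range (m + 1), (n.choose k : ℝ)) ≤ n * Real.binEntropy p := by
  have hq0 : 0 < 1 - p := by linarith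
  have hmn : m ≤ n := by
    have : (m : ℝ) ≤ n := hm.trans (by nlinarith [(n.cast_nonneg : (0 : ℝ) ≤ n)])
    exact_mod_cast this
  have hsum : 0 < ∑ k ∈ range (m + 1), (n.choose k : ℝ) :=
    sum_pos' (fun _ _ => Nat.cast_nonneg _) ⟨0, by simp⟩
  have hlog : Real.log (∑ k ∈ range (m + 1), (n.choose k : ℝ))
      + (m * Real.log p + (n - m) * Real.log (1 - p)) ≤ 0 := by
    rw [← Nat.cast_sub hmn, ← Real.log_pow, ← Real.log_pow, ← Real.log_mul (by positivity)
      (by positivity), ← Real.log_mul hsum.ne' (by positivity)]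
    exact Real.log_nonpos (by positivity)
      (sum_range_choose_mul_pow_le_one hmn hp0.le (by linarith))
  have hlog_le : Real.log p ≤ Real.log (1 - p) := Real.log_le_log hp0 (by linarith)
  have hlog_nonpos : Real.log (1 - p) ≤ 0 := Real.log_nonpos hq0.le (by linarith)
  rw [Real.binEntropy, Real.log_inv, Real.log_inv]
  nlinarith [mul_le_mul_of_nonneg_right hm (sub_nonneg.2 hlog_le)]

section Hamming

variable {ι A : Type*} [Fintype ι] [DecidableEq ι] [Fintype A] [DecidableEq A] [Nonempty A]

lemma card_filter_hammingDist_le (p : ι → A) (m : ℕ) :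
    #{q | hammingDist p q ≤ m} ≤
      (∑ k ∈ range (m + 1), (Fintype.card ι).choose k) * Fintype.card A ^ m := by
  set small := (range (m + 1)).biUnion fun k => powersetCard k (univ : Finset ι)
  have hsmall : #small ≤ ∑ k ∈ range (m + 1), (Fintype.card ι).choose k :=
    card_biUnion_le.trans_eq (sum_congr rfl fun k _ => by rw [card_powersetCard, card_univ])
  -- a word near `p` is determined by the set where it differs from `p` and its values there
  have hcover : ({q | hammingDist p q ≤ m} : Finset (ι → A)) ⊆
      small.biUnion fun D => Fintype.piFinset fun i => if i ∈ D then univ else {p i} := by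
    intro q hq
    rw [mem_filter] at hq
    refine mem_biUnion.2
      ⟨({i | p i ≠ q i} : Finset ι), mem_biUnion.2 ⟨hammingDist p q, ?_, ?_⟩, ?_⟩
    · exact mem_range.2 (Nat.lt_succ_of_le hq.2)
    · exact mem_powersetCard_univ.2 rfl
    · refine Fintype.mem_piFinset.2 fun i => ?_
      split_ifs with h
      · exact mem_univ _
      · simpa [eq_comm] using h
  calc #{q | hammingDist p q ≤ m} ≤ ∑ D ∈ small, Fintype.card A ^ #D := by
        refine (card_le_card hcover).trans
          (card_biUnion_le.trans_eq (sum_congr rfl fun D _ => ?_))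
        simp [Fintype.card_piFinset, apply_ite Finset.card, prod_ite_mem]
    _ ≤ ∑ _D ∈ small, Fintype.card A ^ m := by
        refine sum_le_sum fun D hD => pow_le_pow_right₀ Fintype.card_pos ?_
        obtain ⟨k, hk, hD⟩ := mem_biUnion.1 hD
        rw [mem_powersetCard_univ.1 hD]
        exact Nat.le_of_lt_succ (mem_range.1 hk)
    _ ≤ _ := by rw [sum_const, smul_eq_mul]; gcongr

lemma card_le_mul_of_forall_exists_hammingDist_le {P P' : Finset (ι → A)} {m : ℕ}
    (h : ∀ q ∈ P', ∃ p ∈ P, hammingDist p q ≤ m) :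
    #P' ≤ #P * ((∑ k ∈ range (m + 1), (Fintype.card ι).choose k) * Fintype.card A ^ m) :=
  calc #P' ≤ #(P.biUnion fun p => {q | hammingDist p q ≤ m}) := card_le_card fun q hq => by
        obtain ⟨p, hp, hpq⟩ := h q hq
        exact mem_biUnion.2 ⟨p, hp, mem_filter.2 ⟨mem_univ _, hpq⟩⟩
    _ ≤ ∑ p ∈ P, #{q | hammingDist p q ≤ m} := card_biUnion_le
    _ ≤ _ := by
        rw [← smul_eq_mul, ← sum_const]
        exact sum_le_sum fun p _ => card_filter_hammingDist_le p m

end Hamming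

section Patterns

variable {G A : Type*} [Group G]

def pattern (x : G → A) (F : Finset G) (g : G) : F → A := fun f => x (f * g)

lemma numPatterns_eq_ncard_range (x : G → A) (F : Finset G) :
    numPatterns x F = (Set.range (pattern x F)).ncard := by
  simp only [numPatterns, pattern, Set.range, funext_iff, eq_comm]

lemma hammingDist_pattern [DecidableEq A] (x x' : G → A) (F : Finset G) (g : G) :
    hammingDist (pattern x F g) (pattern x' F g) = #{f ∈ F | x (f * g) ≠ x' (f * g)} := by
  show hammingDist (fun f : F => x (f * g)) (fun f : F => x' (f * g)) = _
  rw [hammingDist, univ_eq_attach, filter_attach (fun f => x (f * g) ≠ x' (f * g)), card_map,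
    card_attach]

variable [Finite A]

lemma one_le_numPatterns (x : G → A) (F : Finset G) : 1 ≤ numPatterns x F := by
  rw [numPatterns_eq_ncard_range]
  exact (Set.ncard_pos (Set.toFinite _)).2 (Set.range_nonempty _)

lemma numPatterns_le_card_pow (x : G → A) (F : Finset G) :
    numPatterns x F ≤ Nat.card A ^ #F := by
  rw [numPatterns_eq_ncard_range]
  refine (Set.ncard_le_card _).trans_eq ?_
  rw [Nat.card_fun, Nat.card_eq_fintype_card (α := F), Fintype.card_coe]

lemma numPatterns_le_numPatterns_mul [DecidableEq A] (x x' : G → A) (F : Finset G) {m : ℕ}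
    (h : ∀ g, hammingDist (pattern x F g) (pattern x' F g) ≤ m) :
    numPatterns x' F ≤
      numPatterns x F * ((∑ k ∈ range (m + 1), (#F).choose k) * Nat.card A ^ m) := by
  classical
  have := Fintype.ofFinite A
  have : Nonempty A := ⟨x 1⟩
  simp only [numPatterns_eq_ncard_range, Set.ncard_eq_toFinset_card _ (Set.toFinite _),
    Nat.card_eq_fintype_card (α := A), ← Fintype.card_coe F]
  exact card_le_mul_of_forall_exists_hammingDist_le fun q hq => by
    obtain ⟨g, rfl⟩ := (Set.Finite.mem_toFinset _).1 hq
    exact ⟨pattern x F g, (Set.Finite.mem_toFinset _).2 ⟨g, rfl⟩, h g⟩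

end Patterns

section Density

variable {G : Type*} [Group G]

lemma exists_card_filter_mul_mem_le_of_upperBanachDensity_lt {S : Set G}
    [DecidablePred (· ∈ S)] {δ : ℝ} (h : upperBanachDensity S < δ) :
    ∃ F₀ : Finset G, F₀.Nonempty ∧ ∀ g, (#{a ∈ F₀ | a * g ∈ S} : ℝ) ≤ δ * #F₀ := by
  have : Nonempty {F : Finset G // F.Nonempty} := ⟨⟨{1}, singleton_nonempty 1⟩⟩
  obtain ⟨⟨F₀, hF₀⟩, hsup⟩ := exists_lt_of_ciInf_lt h
  have hF₀pos : (0 : ℝ) < #F₀ := by exact_mod_cast hF₀.card_pos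
  have hwindow : ∀ g, (S ∩ (fun f => f * g) '' (F₀ : Set G)).ncard = #{a ∈ F₀ | a * g ∈ S} :=
    fun g => by
      rw [Set.inter_comm, ← Set.image_inter_preimage,
        Set.ncard_image_of_injective _ (mul_left_injective g), ← Set.ncard_coe_finset,
        coe_filter]
      rfl
  have hbdd : BddAbove (Set.range fun g : G =>
      ((S ∩ (fun f => f * g) '' (F₀ : Set G)).ncard : ℝ) / #F₀) := by
    refine ⟨1, Set.forall_mem_range.2 fun g => (div_le_one hF₀pos).2 ?_⟩
    rw [hwindow]
    exact_mod_cast card_filter_le _ _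
  refine ⟨F₀, hF₀, fun g => ?_⟩
  have := (le_ciSup hbdd g).trans_lt hsup
  rw [hwindow, div_lt_iff₀ hF₀pos] at this
  exact this.le

variable [DecidableEq G]

lemma card_filter_mul_mem_le_add_sum_card_symmDiff {S : Set G} [DecidablePred (· ∈ S)]
    {F₀ : Finset G} (hF₀ : F₀.Nonempty) {δ : ℝ} (hS : ∀ g, (#{a ∈ F₀ | a * g ∈ S} : ℝ) ≤ δ * #F₀)
    (E : Finset G) (h : G) :
    (#{e ∈ E | e * h ∈ S} : ℝ) ≤ δ * #E + ∑ a ∈ F₀, (#(E.image (a * ·) ∆ E) : ℝ) := by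
  have hshift : ∀ a,
      #{e ∈ E | e * h ∈ S} ≤ #{e ∈ E | a * (e * h) ∈ S} + #(E.image (a * ·) ∆ E) := by
    intro a
    refine (card_le_card ?_).trans ((card_union_le _ _).trans
      (add_le_add_left (card_image_le (f := (a * ·))) _))
    intro e he
    rw [mem_filter] at he
    by_cases hea : e ∈ E.image (a * ·)
    · obtain ⟨e', he', rfl⟩ := mem_image.1 hea
      exact mem_union_left _
        (mem_image_of_mem _ (mem_filter.2 ⟨he', by rw [← mul_assoc]; exact he.2⟩))
    · exact mem_union_right _ (mem_symmDiff.2 (Or.inr ⟨he.1, hea⟩))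
  have hcount : ∑ a ∈ F₀, (#{e ∈ E | a * (e * h) ∈ S} : ℝ) =
      ∑ e ∈ E, (#{a ∈ F₀ | a * (e * h) ∈ S} : ℝ) := by
    have := sum_card_bipartiteAbove_eq_sum_card_bipartiteBelow (s := F₀) (t := E)
      (r := fun a e => a * (e * h) ∈ S)
    simp only [bipartiteAbove, bipartiteBelow] at this
    exact_mod_cast this
  have hF₀pos : (0 : ℝ) < #F₀ := by exact_mod_cast hF₀.card_pos
  have hsum : (0 : ℝ) ≤ ∑ a ∈ F₀, (#(E.image (a * ·) ∆ E) : ℝ) :=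
    sum_nonneg fun _ _ => by positivity
  refine le_of_mul_le_mul_left ?_ hF₀pos
  calc (#F₀ : ℝ) * #{e ∈ E | e * h ∈ S} = ∑ a ∈ F₀, (#{e ∈ E | e * h ∈ S} : ℝ) := by
        rw [sum_const, nsmul_eq_mul]
    _ ≤ ∑ a ∈ F₀, ((#{e ∈ E | a * (e * h) ∈ S} : ℝ) + #(E.image (a * ·) ∆ E)) :=
        sum_le_sum fun a _ => by exact_mod_cast hshift a
    _ = ∑ e ∈ E, (#{a ∈ F₀ | a * (e * h) ∈ S} : ℝ) +
          ∑ a ∈ F₀, (#(E.image (a * ·) ∆ E) : ℝ) := by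
        rw [sum_add_distrib, hcount]
    _ ≤ ∑ e ∈ E, δ * #F₀ + ∑ a ∈ F₀, (#(E.image (a * ·) ∆ E) : ℝ) := by
        gcongr with e
        exact hS _
    _ ≤ #F₀ * (δ * #E + ∑ a ∈ F₀, (#(E.image (a * ·) ∆ E) : ℝ)) := by
        have : (1 : ℝ) ≤ #F₀ := by exact_mod_cast hF₀.card_pos
        rw [sum_const, nsmul_eq_mul]
        nlinarith

lemma eventually_sum_card_symmDiff_le {F : ℕ → Finset G} (hne : ∀ n, (F n).Nonempty)
    (hF : ∀ a : G, Tendsto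
      (fun n => ((((F n).image (a * ·)) ∆ (F n)).card : ℝ) / (F n).card) atTop (nhds 0))
    (F₀ : Finset G) {δ : ℝ} (hδ : 0 < δ) :
    ∀ᶠ n in atTop, ∑ a ∈ F₀, (#((F n).image (a * ·) ∆ F n) : ℝ) ≤ δ * #(F n) := by
  have hsum := tendsto_finsetSum F₀ fun a _ => hF a
  rw [sum_const_zero] at hsum
  filter_upwards [hsum.eventually (gt_mem_nhds hδ)] with n hn
  rw [← sum_div, div_lt_iff₀ (by exact_mod_cast (hne n).card_pos)] at hn
  exact hn.le

end Density

lemma limsup_le_limsup_add_of_eventually_le {ι : Type*} {l : Filter ι} [l.NeBot] {u v : ι → ℝ}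
    {a b C : ℝ} (hu : ∀ i, u i ∈ Set.Icc a b) (hv : ∀ i, a ≤ v i)
    (h : ∀ᶠ i in l, v i ≤ u i + C) :
    limsup v l ≤ limsup u l + C := by
  have hu_cobdd : IsCoboundedUnder (· ≤ ·) l u :=
    (isBoundedUnder_of ⟨a, fun i => (hu i).1⟩ : IsBoundedUnder (· ≥ ·) l u).isCoboundedUnder_le
  rw [← limsup_add_const l u C (isBoundedUnder_of ⟨b, fun i => (hu i).2⟩) hu_cobdd]
  exact limsup_le_limsup h (isBoundedUnder_of ⟨a, hv⟩).isCoboundedUnder_le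
    (isBoundedUnder_of ⟨b + C, fun i => by linarith [(hu i).2]⟩)

section Entropy

variable {G A : Type*} [Group G] [Finite A]

lemma log_numPatterns_div_card_mem_Icc (x : G → A) (F : Finset G) :
    Real.log (numPatterns x F) / #F ∈ Set.Icc 0 (Real.log (Nat.card A)) := by
  have : Nonempty A := ⟨x 1⟩
  refine ⟨div_nonneg (Real.log_nonneg (by exact_mod_cast one_le_numPatterns x F))
    (Nat.cast_nonneg _),
    div_le_of_le_mul₀ (Nat.cast_nonneg _) (Real.log_nonneg (by exact_mod_cast Nat.card_pos)) ?_⟩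
  calc Real.log (numPatterns x F) ≤ Real.log ((Nat.card A : ℝ) ^ #F) :=
        Real.log_le_log (by exact_mod_cast one_le_numPatterns x F)
          (by exact_mod_cast numPatterns_le_card_pow x F)
    _ = Real.log (Nat.card A) * #F := by rw [Real.log_pow, mul_comm]

lemma log_numPatterns_le_add [DecidableEq A] {x x' : G → A} {E : Finset G} {δ : ℝ}
    (hδ0 : 0 < δ) (hδ : δ ≤ 1 / 4)
    (h : ∀ g, (#{e ∈ E | x (e * g) ≠ x' (e * g)} : ℝ) ≤ 2 * δ * #E) :
    Real.log (numPatterns x' E) ≤ Real.log (numPatterns x E) +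
      #E * (2 * δ * Real.log (Nat.card A) + Real.binEntropy (2 * δ)) := by
  have : Nonempty A := ⟨x 1⟩
  set m := ⌊2 * δ * #E⌋₊
  have hm : (m : ℝ) ≤ 2 * δ * #E := Nat.floor_le (by positivity)
  have hcount := numPatterns_le_numPatterns_mul x x' E (m := m) fun g => by
    rw [hammingDist_pattern]
    exact Nat.le_floor (h g)
  have hchoose : Real.log (∑ k ∈ range (m + 1), ((#E).choose k : ℝ)) ≤
      #E * Real.binEntropy (2 * δ) :=
    log_sum_range_choose_le (by linarith) (by linarith) hm
  have hApos : (0 : ℝ) < Nat.card A := by exact_mod_cast Nat.card_pos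
  have hlogA : 0 ≤ Real.log (Nat.card A) := Real.log_nonneg (by exact_mod_cast Nat.card_pos)
  have hsum : (0 : ℝ) < ∑ k ∈ range (m + 1), ((#E).choose k : ℝ) :=
    sum_pos' (fun _ _ => Nat.cast_nonneg _) ⟨0, by simp⟩
  calc Real.log (numPatterns x' E)
      ≤ Real.log (numPatterns x E * ((∑ k ∈ range (m + 1), ((#E).choose k : ℝ)) *
          (Nat.card A : ℝ) ^ m)) :=
        Real.log_le_log (by exact_mod_cast one_le_numPatterns x' E) (by exact_mod_cast hcount)
    _ = Real.log (numPatterns x E) + Real.log (∑ k ∈ range (m + 1), ((#E).choose k : ℝ)) +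
          m * Real.log (Nat.card A) := by
        rw [Real.log_mul (Nat.cast_pos.2 (one_le_numPatterns x E)).ne'
            (mul_pos hsum (pow_pos hApos m)).ne', Real.log_mul hsum.ne' (pow_pos hApos m).ne',
          Real.log_pow, add_assoc]
    _ ≤ _ := by linarith [mul_le_mul_of_nonneg_right hm hlogA]

lemma orbitEntropy_le_add_of_eventually {F : ℕ → Finset G} (hne : ∀ n, (F n).Nonempty)
    {x x' : G → A} {C : ℝ}
    (h : ∀ᶠ n in atTop,
      Real.log (numPatterns x' (F n)) ≤ Real.log (numPatterns x (F n)) + #(F n) * C) :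
    orbitEntropy F x' ≤ orbitEntropy F x + C := by
  refine limsup_le_limsup_add_of_eventually_le (fun n => log_numPatterns_div_card_mem_Icc x (F n))
    (fun n => (log_numPatterns_div_card_mem_Icc x' (F n)).1) ?_
  filter_upwards [h] with n hn
  have hpos : (0 : ℝ) < #(F n) := by exact_mod_cast (hne n).card_pos
  calc Real.log (numPatterns x' (F n)) / #(F n)
      ≤ (Real.log (numPatterns x (F n)) + #(F n) * C) / #(F n) :=
        div_le_div_of_nonneg_right hn hpos.le
    _ = Real.log (numPatterns x (F n)) / #(F n) + C := by field_simp

lemma orbitEntropy_le_add_of_upperBanachDensity_lt [DecidableEq G] {F : ℕ → Finset G}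
    (hne : ∀ n, (F n).Nonempty)
    (hF : ∀ a : G, Tendsto
      (fun n => ((((F n).image (a * ·)) ∆ (F n)).card : ℝ) / (F n).card) atTop (nhds 0))
    {δ : ℝ} (hδ0 : 0 < δ) (hδ : δ ≤ 1 / 4) {x x' : G → A}
    (hxx : upperBanachDensity {g | x g ≠ x' g} < δ) :
    orbitEntropy F x' ≤
      orbitEntropy F x + (2 * δ * Real.log (Nat.card A) + Real.binEntropy (2 * δ)) := by
  classical
  obtain ⟨F₀, hF₀, hS⟩ := exists_card_filter_mul_mem_le_of_upperBanachDensity_lt hxx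
  refine orbitEntropy_le_add_of_eventually hne ?_
  filter_upwards [eventually_sum_card_symmDiff_le hne hF F₀ hδ0] with n hn
  refine log_numPatterns_le_add hδ0 hδ fun g => ?_
  calc (#{e ∈ F n | x (e * g) ≠ x' (e * g)} : ℝ)
      = #{e ∈ F n | e * g ∈ {g | x g ≠ x' g}} := rfl
    _ ≤ δ * #(F n) + ∑ a ∈ F₀, (#((F n).image (a * ·) ∆ F n) : ℝ) :=
        card_filter_mul_mem_le_add_sum_card_symmDiff (S := {g | x g ≠ x' g}) hF₀ hS (F n) g
    _ ≤ 2 * δ * #(F n) := by linarith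

end Entropy

theorem entropy_continuous_in_weyl_general {G A : Type*} [Group G] [DecidableEq G]
    [Finite A]
    (F : ℕ → Finset G) (hne : ∀ n, (F n).Nonempty)
    (hF : ∀ a : G, Tendsto
      (fun n => ((((F n).image (a * ·)) ∆ (F n)).card : ℝ) / (F n).card) atTop (nhds 0)) :
    ∀ ε > (0 : ℝ), ∃ δ : ℝ, 0 < δ ∧ δ < 1 / 4 ∧ binEntropy (2 * δ) < ε ∧
      ∀ x x' : G → A, upperBanachDensity {g : G | x g ≠ x' g} < δ →
        |orbitEntropy F x - orbitEntropy F x'| ≤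
          2 * δ * Real.log (Nat.card A) + Real.log 2 * binEntropy (2 * δ) := by
  intro ε hε
  obtain ⟨δ, hδ0, hδ, hδε⟩ := exists_binEntropy_two_mul_lt hε
  refine ⟨δ, hδ0, hδ, hδε, fun x x' hxx => ?_⟩
  have hx'x : upperBanachDensity {g | x' g ≠ x g} < δ := by simpa only [ne_comm] using hxx
  have h₁ := orbitEntropy_le_add_of_upperBanachDensity_lt hne hF hδ0 hδ.le hxx
  have h₂ := orbitEntropy_le_add_of_upperBanachDensity_lt hne hF hδ0 hδ.le hx'x
  rw [log_two_mul_binEntropy, abs_sub_le_iff]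
  constructor <;> linarith

/-- For a countable amenable group `G` and a finite alphabet `A`, the
entropy of the orbit closure is continuous on `A^G` with respect to the pseudometric
`D*(x,x') = D*({g : x g ≠ x' g})`; quantitatively, for every `ε > 0` there is
`δ ∈ (0, 1/4)` with `E_S(2δ) < ε` such that `D*(x,x') < δ` implies
`|h(x) − h(x')| ≤ 2δ log|A| + log 2 · E_S(2δ)`. -/
theorem entropy_continuous_in_weyl {G A : Type*} [Group G] [Countable G] [DecidableEq G]
    [Finite A]
    (F : ℕ → Finset G) (hne : ∀ n, (F n).Nonempty)
    (hF : ∀ a : G, Tendsto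
      (fun n => ((((F n).image (a * ·)) ∆ (F n)).card : ℝ) / (F n).card) atTop (nhds 0)) :
    ∀ ε > (0 : ℝ), ∃ δ : ℝ, 0 < δ ∧ δ < 1 / 4 ∧ binEntropy (2 * δ) < ε ∧
      ∀ x x' : G → A, upperBanachDensity {g : G | x g ≠ x' g} < δ →
        |orbitEntropy F x - orbitEntropy F x'| ≤
          2 * δ * Real.log (Nat.card A) + Real.log 2 * binEntropy (2 * δ) :=
  entropy_continuous_in_weyl_general F hne hF
end
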